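/- arXiv:2301.11901 — 3 statements merged into one kernel-verified Lean document; each statement's English description precedes it below -/
import Mathlib

section
/- Let $g$ be a real-valued smooth function on $(a,b)$, continuous at the endpoints, with $|g''(x)| \geq \lambda > 0$ on $(a,b)$. Let $f$ be continuously differentiable on $[a,b]$. Then $\left|\int_a^b f(x) e^{i g(x)} dx\right| \leq C \lambda^{-1/2} \left(|f(b)| + \int_a^b |f'(x)| dx\right)$ for an absolute constant $C$. -/
open MeasureTheory Set intervalIntegral in
lemma vdc_norm_exp_I_mul (r : ℝ) : ‖Complex.exp (Complex.I * r)‖ = 1 := by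
  simp [Complex.norm_exp]

open MeasureTheory Set intervalIntegral in
lemma vdc_conj_intervalIntegral (f : ℝ → ℂ) (a b : ℝ) :
    ∫ x in a..b, (starRingEnd ℂ) (f x) = (starRingEnd ℂ) (∫ x in a..b, f x) := by
  simp [intervalIntegral, ← integral_conj, map_sub]

open MeasureTheory Set intervalIntegral in
lemma lemA_core (a b μ a' b' : ℝ) (g g1 g2 : ℝ → ℝ) (hμ : 0 < μ)
    (hd1 : ∀ x ∈ Ioo a b, HasDerivAt g (g1 x) x)
    (hd2 : ∀ x ∈ Ioo a b, HasDerivAt g1 (g2 x) x)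
    (hg1c : ContinuousOn g1 (Ioo a b)) (hg2c : ContinuousOn g2 (Ioo a b))
    (hlow : ∀ x ∈ Ioo a b, μ ≤ |g1 x|) (hsgn : ∀ x ∈ Ioo a b, 0 ≤ g2 x)
    (ha : a < a') (hab' : a' ≤ b') (hb : b' < b) :
    ‖∫ x in a'..b', Complex.exp (Complex.I * g x)‖ ≤ 4 / μ := by
  have hsub : Icc a' b' ⊆ Ioo a b := fun x hx => ⟨lt_of_lt_of_le ha hx.1, lt_of_le_of_lt hx.2 hb⟩
  have huIcc : uIcc a' b' = Icc a' b' := uIcc_of_le hab'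
  set u : ℝ → ℂ := fun x => (Complex.I * g1 x)⁻¹ with hu_def
  set u' : ℝ → ℂ := fun x => -(Complex.I * g2 x) / (Complex.I * g1 x) ^ 2 with hu'_def
  set v : ℝ → ℂ := fun x => Complex.exp (Complex.I * g x) with hv_def
  set v' : ℝ → ℂ := fun x => Complex.exp (Complex.I * g x) * (Complex.I * g1 x) with hv'_def
  have hg1ne : ∀ x ∈ Ioo a b, g1 x ≠ 0 := fun x hx => by
    have := hlow x hx; intro h; rw [h] at this; simp at this; linarith
  have hne : ∀ x ∈ Ioo a b, Complex.I * (g1 x : ℂ) ≠ 0 := fun x hx =>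
    mul_ne_zero Complex.I_ne_zero (by exact_mod_cast hg1ne x hx)
  -- derivatives
  have hdu : ∀ x ∈ Ioo a b, HasDerivAt u (u' x) x := by
    intro x hx
    have h1 : HasDerivAt (fun y => Complex.I * (g1 y : ℂ)) (Complex.I * g2 x) x :=
      ((hd2 x hx).ofReal_comp).const_mul Complex.I
    have h2 := (hasDerivAt_const x (1:ℂ)).div h1 (hne x hx)
    exact h1.inv (hne x hx)
  have hdv : ∀ x ∈ Ioo a b, HasDerivAt v (v' x) x := by
    intro x hx
    have h1 : HasDerivAt (fun y => Complex.I * (g y : ℂ)) (Complex.I * g1 x) x :=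
      ((hd1 x hx).ofReal_comp).const_mul Complex.I
    simpa [hv_def, hv'_def] using h1.cexp
  -- continuity
  have hc1 : ContinuousOn (fun x => Complex.I * (g1 x : ℂ)) (Icc a' b') :=
    continuousOn_const.mul (Complex.continuous_ofReal.comp_continuousOn (hg1c.mono hsub))
  have hc2 : ContinuousOn (fun x => Complex.I * (g2 x : ℂ)) (Icc a' b') :=
    continuousOn_const.mul (Complex.continuous_ofReal.comp_continuousOn (hg2c.mono hsub))
  have hcg : ContinuousOn g (Icc a' b') := fun x hx =>
    ((hd1 x (hsub hx)).continuousAt).continuousWithinAt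
  have hcv : ContinuousOn v (Icc a' b') :=
    Complex.continuous_exp.comp_continuousOn
      (continuousOn_const.mul (Complex.continuous_ofReal.comp_continuousOn hcg))
  have hcu' : ContinuousOn u' (Icc a' b') :=
    hc2.neg.div (hc1.pow 2) (fun x hx => pow_ne_zero _ (hne x (hsub hx)))
  have hcv' : ContinuousOn v' (Icc a' b') := hcv.mul hc1
  have hiu' : IntervalIntegrable u' volume a' b' := (hcu'.mono huIcc.subset).intervalIntegrable
  have hiv' : IntervalIntegrable v' volume a' b' := (hcv'.mono huIcc.subset).intervalIntegrable
  -- integration by parts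
  have hparts := integral_mul_deriv_eq_deriv_mul
    (fun x hx => hdu x (hsub (huIcc ▸ hx))) (fun x hx => hdv x (hsub (huIcc ▸ hx))) hiu' hiv'
  have hLHS : ∫ x in a'..b', u x * v' x = ∫ x in a'..b', Complex.exp (Complex.I * g x) := by
    apply integral_congr
    intro x hx
    have hne' := hne x (hsub (huIcc ▸ hx))
    show u x * v' x = Complex.exp (Complex.I * g x)
    simp only [hu_def, hv'_def]
    rw [mul_comm (Complex.exp _), ← mul_assoc, inv_mul_cancel₀ hne', one_mul]
  -- norms
  have hnu : ∀ x ∈ Ioo a b, ‖u x‖ ≤ μ⁻¹ := by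
    intro x hx
    have h1 : ‖u x‖ = |g1 x|⁻¹ := by
      simp [hu_def, norm_inv, norm_mul, Complex.norm_I, Complex.norm_real]
    rw [h1]
    exact inv_anti₀ hμ (hlow x hx)
  have hnv : ∀ x, ‖v x‖ = 1 := fun x => vdc_norm_exp_I_mul (g x)
  -- the integral of ‖u'‖
  have hw : ∀ x ∈ Icc a' b', HasDerivAt (fun y => -(g1 y)⁻¹) (g2 x / g1 x ^ 2) x := by
    intro x hx
    have := ((hd2 x (hsub hx)).inv (hg1ne x (hsub hx))).neg
    rw [neg_div, neg_neg] at this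
    exact this
  have hcw' : ContinuousOn (fun x => g2 x / g1 x ^ 2) (Icc a' b') :=
    (hg2c.mono hsub).div ((hg1c.mono hsub).pow 2)
      (fun x hx => pow_ne_zero _ (hg1ne x (hsub hx)))
  have hFTC : ∫ x in a'..b', g2 x / g1 x ^ 2 = (g1 a')⁻¹ - (g1 b')⁻¹ := by
    rw [integral_eq_sub_of_hasDerivAt (fun x hx => hw x (huIcc ▸ hx))
      ((hcw'.mono huIcc.subset).intervalIntegrable)]
    ring
  have hbound2 : ‖∫ x in a'..b', u' x * v x‖ ≤ 2 / μ := by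
    have h1 : ‖∫ x in a'..b', u' x * v x‖ ≤ ∫ x in a'..b', ‖u' x * v x‖ :=
      norm_integral_le_integral_norm hab'
    have h2 : ∫ x in a'..b', ‖u' x * v x‖ = ∫ x in a'..b', g2 x / g1 x ^ 2 := by
      apply integral_congr
      intro x hx
      have hx' : x ∈ Ioo a b := hsub (huIcc ▸ hx)
      show ‖u' x * v x‖ = g2 x / g1 x ^ 2
      rw [norm_mul, hnv, mul_one]
      simp only [hu'_def]
      rw [norm_div, norm_neg, norm_pow, norm_mul, norm_mul]
      simp only [Complex.norm_I, Complex.norm_real, Real.norm_eq_abs, one_mul]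
      rw [abs_of_nonneg (hsgn x hx'), sq_abs]
    have h3 : (g1 a')⁻¹ - (g1 b')⁻¹ ≤ 2 / μ := by
      have ha' : a' ∈ Ioo a b := hsub ⟨le_refl _, hab'⟩
      have hb'' : b' ∈ Ioo a b := hsub ⟨hab', le_refl _⟩
      have h4 : |(g1 a')⁻¹| ≤ μ⁻¹ := by
        rw [abs_inv]; exact inv_anti₀ hμ (hlow _ ha')
      have h5 : |(g1 b')⁻¹| ≤ μ⁻¹ := by
        rw [abs_inv]; exact inv_anti₀ hμ (hlow _ hb'')
      have := abs_sub ((g1 a')⁻¹) ((g1 b')⁻¹)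
      have h6 : (g1 a')⁻¹ - (g1 b')⁻¹ ≤ |(g1 a')⁻¹| + |(g1 b')⁻¹| := by
        calc (g1 a')⁻¹ - (g1 b')⁻¹ ≤ |(g1 a')⁻¹ - (g1 b')⁻¹| := le_abs_self _
        _ ≤ |(g1 a')⁻¹| + |(g1 b')⁻¹| := abs_sub _ _
      calc (g1 a')⁻¹ - (g1 b')⁻¹ ≤ μ⁻¹ + μ⁻¹ := by linarith
      _ = 2 / μ := by rw [div_eq_mul_inv]; ring
    calc ‖∫ x in a'..b', u' x * v x‖ ≤ ∫ x in a'..b', ‖u' x * v x‖ := h1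
    _ = (g1 a')⁻¹ - (g1 b')⁻¹ := by rw [h2, hFTC]
    _ ≤ 2 / μ := h3
  -- put together
  rw [← hLHS, hparts]
  have ha' : a' ∈ Ioo a b := hsub ⟨le_refl _, hab'⟩
  have hb'' : b' ∈ Ioo a b := hsub ⟨hab', le_refl _⟩
  calc ‖u b' * v b' - u a' * v a' - ∫ x in a'..b', u' x * v x‖
      ≤ ‖u b' * v b' - u a' * v a'‖ + ‖∫ x in a'..b', u' x * v x‖ := norm_sub_le _ _
    _ ≤ (‖u b' * v b'‖ + ‖u a' * v a'‖) + 2 / μ :=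
        add_le_add (norm_sub_le _ _) hbound2
    _ ≤ (μ⁻¹ * 1 + μ⁻¹ * 1) + 2 / μ := by
        gcongr
        · rw [norm_mul, hnv]; exact mul_le_mul_of_nonneg_right (hnu _ hb'') zero_le_one
        · rw [norm_mul, hnv]; exact mul_le_mul_of_nonneg_right (hnu _ ha') zero_le_one
    _ = 4 / μ := by field_simp; ring

open MeasureTheory Set intervalIntegral in
lemma lemA (a b μ : ℝ) (g g1 g2 : ℝ → ℝ) (hab : a < b) (hμ : 0 < μ)
    (hgc : ContinuousOn g (Icc a b))
    (hd1 : ∀ x ∈ Ioo a b, HasDerivAt g (g1 x) x)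
    (hd2 : ∀ x ∈ Ioo a b, HasDerivAt g1 (g2 x) x)
    (hg1c : ContinuousOn g1 (Ioo a b)) (hg2c : ContinuousOn g2 (Ioo a b))
    (hlow : ∀ x ∈ Ioo a b, μ ≤ |g1 x|) (hsgn : ∀ x ∈ Ioo a b, 0 ≤ g2 x) :
    ‖∫ x in a..b, Complex.exp (Complex.I * g x)‖ ≤ 4 / μ := by
  apply le_of_forall_pos_le_add
  intro ε hε
  set e : ℝ → ℂ := fun x => Complex.exp (Complex.I * g x) with he_def
  have hce : ContinuousOn e (Icc a b) :=
    Complex.continuous_exp.comp_continuousOn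
      (continuousOn_const.mul (Complex.continuous_ofReal.comp_continuousOn hgc))
  have hInt : ∀ c d : ℝ, c ∈ Icc a b → d ∈ Icc a b → IntervalIntegrable e volume c d := by
    intro c d hc hd
    exact (hce.mono ((uIcc_subset_Icc hc hd))).intervalIntegrable
  set ε' : ℝ := min (ε / 2) ((b - a) / 3) with hε'_def
  have hε'pos : 0 < ε' := lt_min (by linarith) (by linarith)
  have hε'le : ε' ≤ (b - a) / 3 := min_le_right _ _
  have hε'le2 : ε' ≤ ε / 2 := min_le_left _ _
  set a' : ℝ := a + ε' with ha'_def
  set b' : ℝ := b - ε' with hb'_def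
  have haa' : a < a' := by simp [ha'_def]; linarith
  have hbb' : b' < b := by simp [hb'_def]; linarith
  have ha'b' : a' ≤ b' := by simp [ha'_def, hb'_def]; linarith
  have ha'mem : a' ∈ Icc a b := ⟨le_of_lt haa', le_trans ha'b' (le_of_lt hbb')⟩
  have hb'mem : b' ∈ Icc a b := ⟨le_trans (le_of_lt haa') ha'b', le_of_lt hbb'⟩
  have hsplit : ∫ x in a..b, e x =
      (∫ x in a..a', e x) + (∫ x in a'..b', e x) + (∫ x in b'..b, e x) := by
    rw [integral_add_adjacent_intervals (hInt a a' (left_mem_Icc.2 hab.le) ha'mem)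
      (hInt a' b' ha'mem hb'mem),
      integral_add_adjacent_intervals (hInt a b' (left_mem_Icc.2 hab.le) hb'mem)
      (hInt b' b hb'mem (right_mem_Icc.2 hab.le))]
  have hn1 : ‖∫ x in a..a', e x‖ ≤ ε' := by
    have := norm_integral_le_of_norm_le_const (C := 1) (f := e) (a := a) (b := a')
      (fun x _ => le_of_eq (vdc_norm_exp_I_mul (g x)))
    rw [abs_of_nonneg (by linarith : (0:ℝ) ≤ a' - a)] at this
    simpa [ha'_def] using this
  have hn3 : ‖∫ x in b'..b, e x‖ ≤ ε' := by
    have := norm_integral_le_of_norm_le_const (C := 1) (f := e) (a := b') (b := b)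
      (fun x _ => le_of_eq (vdc_norm_exp_I_mul (g x)))
    rw [abs_of_nonneg (by linarith : (0:ℝ) ≤ b - b')] at this
    simpa [hb'_def] using this
  have hn2 : ‖∫ x in a'..b', e x‖ ≤ 4 / μ :=
    lemA_core a b μ a' b' g g1 g2 hμ hd1 hd2 hg1c hg2c hlow hsgn haa' ha'b' hbb'
  calc ‖∫ x in a..b, e x‖
      ≤ ‖∫ x in a..a', e x‖ + ‖∫ x in a'..b', e x‖ + ‖∫ x in b'..b, e x‖ := by
        rw [hsplit]; exact (norm_add_le _ _).trans (by gcongr; exact norm_add_le _ _)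
    _ ≤ ε' + 4 / μ + ε' := by gcongr
    _ ≤ 4 / μ + ε := by linarith

open MeasureTheory Set intervalIntegral in
lemma lemB (a b lam : ℝ) (g g1 g2 : ℝ → ℝ) (hab : a < b) (hlam : 0 < lam)
    (hgc : ContinuousOn g (Icc a b))
    (hd1 : ∀ x ∈ Ioo a b, HasDerivAt g (g1 x) x)
    (hd2 : ∀ x ∈ Ioo a b, HasDerivAt g1 (g2 x) x)
    (hg1c : ContinuousOn g1 (Ioo a b)) (hg2c : ContinuousOn g2 (Ioo a b))
    (hlow : ∀ x ∈ Ioo a b, lam ≤ g2 x) :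
    ‖∫ x in a..b, Complex.exp (Complex.I * g x)‖ ≤ 10 / Real.sqrt lam := by
  set s : ℝ := Real.sqrt lam with hs_def
  have hs : 0 < s := Real.sqrt_pos.2 hlam
  have hs2 : s * s = lam := Real.mul_self_sqrt hlam.le
  set e : ℝ → ℂ := fun x => Complex.exp (Complex.I * g x) with he_def
  have hce : ContinuousOn e (Icc a b) :=
    Complex.continuous_exp.comp_continuousOn
      (continuousOn_const.mul (Complex.continuous_ofReal.comp_continuousOn hgc))
  have hInt : ∀ c d : ℝ, c ∈ Icc a b → d ∈ Icc a b → IntervalIntegrable e volume c d :=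
    fun c d hc hd => (hce.mono ((uIcc_subset_Icc hc hd))).intervalIntegrable
  -- monotonicity of g1
  have hmono : ∀ u ∈ Ioo a b, ∀ v ∈ Ioo a b, u ≤ v → g1 u + lam * (v - u) ≤ g1 v := by
    intro u hu v hv huv
    have hp : MonotoneOn (fun x => g1 x - lam * x) (Ioo a b) := by
      apply monotoneOn_of_deriv_nonneg (convex_Ioo a b)
      · exact hg1c.sub ((continuous_const.mul continuous_id).continuousOn)
      · intro x hx
        rw [interior_Ioo] at hx
        exact ((hd2 x hx).sub (by simpa using (hasDerivAt_id x).const_mul lam)).differentiableAt.differentiableWithinAt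
      · intro x hx
        rw [interior_Ioo] at hx
        have hdp : HasDerivAt (fun x => g1 x - lam * x) (g2 x - lam) x :=
          (hd2 x hx).sub (by simpa using (hasDerivAt_id x).const_mul lam)
        rw [hdp.deriv]
        linarith [hlow x hx]
    have := hp hu hv huv
    simp only at this
    linarith
  have hsgn : ∀ x ∈ Ioo a b, 0 ≤ g2 x := fun x hx => le_trans hlam.le (hlow x hx)
  -- the split points
  set S1 : Set ℝ := {x | x ∈ Ioo a b ∧ g1 x ≤ -s} with hS1_def
  set S2 : Set ℝ := {x | x ∈ Ioo a b ∧ s ≤ g1 x} with hS2_def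
  have hS1sub : insert a S1 ⊆ Icc a b := by
    intro x hx
    rcases hx with rfl | hx
    · exact left_mem_Icc.2 hab.le
    · exact Ioo_subset_Icc_self hx.1
  have hS2sub : insert b S2 ⊆ Icc a b := by
    intro x hx
    rcases hx with rfl | hx
    · exact right_mem_Icc.2 hab.le
    · exact Ioo_subset_Icc_self hx.1
  have hbd1 : BddAbove (insert a S1) := (bddAbove_Icc (a := a) (b := b)).mono hS1sub
  have hbd2 : BddBelow (insert b S2) := (bddBelow_Icc : BddBelow (Icc a b)).mono hS2sub
  set c : ℝ := sSup (insert a S1) with hc_def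
  set d : ℝ := sInf (insert b S2) with hd_def
  have hac : a ≤ c := le_csSup hbd1 (mem_insert a S1)
  have hcb : c ≤ b := csSup_le ⟨a, mem_insert a S1⟩ (fun x hx => (hS1sub hx).2)
  have had : a ≤ d := le_csInf ⟨b, mem_insert b S2⟩ (fun x hx => (hS2sub hx).1)
  have hdb : d ≤ b := csInf_le hbd2 (mem_insert b S2)
  have hcd : c ≤ d := by
    apply csSup_le ⟨a, mem_insert a S1⟩
    intro x hx
    apply le_csInf ⟨b, mem_insert b S2⟩
    intro y hy
    rcases hx with rfl | hx
    · rcases hy with rfl | hy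
      · exact hab.le
      · exact hy.1.1.le
    · rcases hy with rfl | hy
      · exact hx.1.2.le
      · by_contra hlt
        push_neg at hlt
        have h1 := hmono y hy.1 x hx.1 hlt.le
        have h2 : 0 ≤ lam * (x - y) := mul_nonneg hlam.le (by linarith)
        have := hy.2
        have := hx.2
        linarith
  -- bounds on g1 in each region
  have hup : ∀ x, c < x → x ∈ Ioo a b → -s < g1 x := by
    intro x hcx hx
    by_contra h
    push_neg at h
    exact absurd (le_csSup hbd1 (mem_insert_of_mem _ ⟨hx, h⟩)) (not_le.2 hcx)
  have hdn : ∀ x, x < d → x ∈ Ioo a b → g1 x < s := by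
    intro x hxd hx
    by_contra h
    push_neg at h
    exact absurd (csInf_le hbd2 (mem_insert_of_mem _ ⟨hx, h⟩)) (not_le.2 hxd)
  -- length of the middle interval
  have hlen : d - c ≤ 2 / s := by
    by_contra h
    push_neg at h
    set t : ℝ := (d - c - 2 / s) / 3 with ht_def
    have h2s : 0 < 2 / s := by positivity
    have ht : 0 < t := by simp only [ht_def]; linarith
    have htlt : 3 * t < d - c := by simp only [ht_def]; linarith
    set u : ℝ := c + t with hu_def
    set v : ℝ := d - t with hv_def
    have hu : u ∈ Ioo a b := ⟨by simp only [hu_def]; linarith,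
      by simp only [hu_def]; nlinarith⟩
    have hv : v ∈ Ioo a b := ⟨by simp only [hv_def]; nlinarith,
      by simp only [hv_def]; linarith⟩
    have huv : u ≤ v := by simp only [hu_def, hv_def]; linarith
    have h1 := hmono u hu v hv huv
    have h2 : -s < g1 u := hup u (by simp [hu_def]; linarith) hu
    have h3 : g1 v < s := hdn v (by simp [hv_def]; linarith) hv
    have h4 : 2 / s ≤ v - u := by simp only [hu_def, hv_def]; linarith
    have h5 : lam * (2 / s) = 2 * s := by
      field_simp
      nlinarith
    have h6 : lam * (2 / s) ≤ lam * (v - u) := by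
      apply mul_le_mul_of_nonneg_left h4 hlam.le
    nlinarith
  -- middle piece
  have hcmem : c ∈ Icc a b := ⟨hac, hcb⟩
  have hdmem : d ∈ Icc a b := ⟨had, hdb⟩
  have hmid : ‖∫ x in c..d, e x‖ ≤ 2 / s := by
    have := norm_integral_le_of_norm_le_const (C := 1) (f := e) (a := c) (b := d)
      (fun x _ => le_of_eq (vdc_norm_exp_I_mul (g x)))
    rw [abs_of_nonneg (by linarith : (0:ℝ) ≤ d - c)] at this
    linarith
  -- left piece
  have hleft : ‖∫ x in a..c, e x‖ ≤ 4 / s := by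
    rcases eq_or_lt_of_le hac with heq | hac'
    · rw [← heq, integral_same]; simp; positivity
    · apply lemA a c s g g1 g2 hac' hs (hgc.mono (Icc_subset_Icc_right hcb))
        (fun x hx => hd1 x ⟨hx.1, lt_of_lt_of_le hx.2 hcb⟩)
        (fun x hx => hd2 x ⟨hx.1, lt_of_lt_of_le hx.2 hcb⟩)
        (hg1c.mono (Ioo_subset_Ioo_right hcb)) (hg2c.mono (Ioo_subset_Ioo_right hcb))
        ?_ (fun x hx => hsgn x ⟨hx.1, lt_of_lt_of_le hx.2 hcb⟩)
      intro x hx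
      have hx' : x ∈ Ioo a b := ⟨hx.1, lt_of_lt_of_le hx.2 hcb⟩
      obtain ⟨y, hy, hxy⟩ := exists_lt_of_lt_csSup ⟨a, mem_insert a S1⟩ hx.2
      rcases hy with rfl | hy
      · exact absurd hx.1 (not_lt.2 hxy.le)
      · have h1 := hmono x hx' y hy.1 hxy.le
        have h2 : 0 ≤ lam * (y - x) := mul_nonneg hlam.le (by linarith)
        have h3 := hy.2
        exact le_abs.2 (Or.inr (by linarith))
  -- right piece
  have hright : ‖∫ x in d..b, e x‖ ≤ 4 / s := by
    rcases eq_or_lt_of_le hdb with heq | hdb'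
    · rw [heq, integral_same]; simp; positivity
    · apply lemA d b s g g1 g2 hdb' hs (hgc.mono (Icc_subset_Icc_left had))
        (fun x hx => hd1 x ⟨lt_of_le_of_lt had hx.1, hx.2⟩)
        (fun x hx => hd2 x ⟨lt_of_le_of_lt had hx.1, hx.2⟩)
        (hg1c.mono (Ioo_subset_Ioo_left had)) (hg2c.mono (Ioo_subset_Ioo_left had))
        ?_ (fun x hx => hsgn x ⟨lt_of_le_of_lt had hx.1, hx.2⟩)
      intro x hx
      have hx' : x ∈ Ioo a b := ⟨lt_of_le_of_lt had hx.1, hx.2⟩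
      obtain ⟨y, hy, hxy⟩ := exists_lt_of_csInf_lt ⟨b, mem_insert b S2⟩ hx.1
      rcases hy with rfl | hy
      · exact absurd hx.2 (not_lt.2 hxy.le)
      · have h1 := hmono y hy.1 x hx' hxy.le
        have h2 : 0 ≤ lam * (x - y) := mul_nonneg hlam.le (by linarith)
        have h3 := hy.2
        exact le_abs.2 (Or.inl (by linarith))
  -- split and sum
  have hsplit : ∫ x in a..b, e x =
      (∫ x in a..c, e x) + (∫ x in c..d, e x) + (∫ x in d..b, e x) := by
    rw [integral_add_adjacent_intervals (hInt a c (left_mem_Icc.2 hab.le) hcmem)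
      (hInt c d hcmem hdmem),
      integral_add_adjacent_intervals (hInt a d (left_mem_Icc.2 hab.le) hdmem)
      (hInt d b hdmem (right_mem_Icc.2 hab.le))]
  calc ‖∫ x in a..b, e x‖
      ≤ ‖∫ x in a..c, e x‖ + ‖∫ x in c..d, e x‖ + ‖∫ x in d..b, e x‖ := by
        rw [hsplit]; exact (norm_add_le _ _).trans (by gcongr; exact norm_add_le _ _)
    _ ≤ 4 / s + 2 / s + 4 / s := by gcongr
    _ = 10 / s := by ring

open MeasureTheory Set intervalIntegral in
lemma lemB' (a b lam : ℝ) (g g1 g2 : ℝ → ℝ) (hab : a < b) (hlam : 0 < lam)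
    (hgc : ContinuousOn g (Icc a b))
    (hd1 : ∀ x ∈ Ioo a b, HasDerivAt g (g1 x) x)
    (hd2 : ∀ x ∈ Ioo a b, HasDerivAt g1 (g2 x) x)
    (hg1c : ContinuousOn g1 (Ioo a b)) (hg2c : ContinuousOn g2 (Ioo a b))
    (hlow : ∀ x ∈ Ioo a b, lam ≤ |g2 x|) :
    ‖∫ x in a..b, Complex.exp (Complex.I * g x)‖ ≤ 10 / Real.sqrt lam := by
  have hne0 : ∀ x ∈ Ioo a b, g2 x ≠ 0 := by
    intro x hx h
    have := hlow x hx
    rw [h] at this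
    simp at this
    linarith
  have hx0 : (a + b) / 2 ∈ Ioo a b := ⟨by linarith, by linarith⟩
  have hsign : (∀ x ∈ Ioo a b, 0 < g2 x) ∨ (∀ x ∈ Ioo a b, g2 x < 0) := by
    rcases lt_or_gt_of_ne (hne0 _ hx0) with h0 | h0
    · right
      intro x hx
      rcases lt_or_gt_of_ne (hne0 x hx) with h1 | h1
      · exact h1
      · exfalso
        have hsub : uIcc x ((a + b) / 2) ⊆ Ioo a b := (ordConnected_Ioo).uIcc_subset hx hx0
        have hiv := intermediate_value_uIcc (hg2c.mono hsub)
        have h0mem : (0:ℝ) ∈ uIcc (g2 x) (g2 ((a + b) / 2)) := by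
          rw [mem_uIcc]; right; exact ⟨h0.le, h1.le⟩
        obtain ⟨y, hy, hy0⟩ := hiv h0mem
        exact hne0 y (hsub hy) hy0
    · left
      intro x hx
      rcases lt_or_gt_of_ne (hne0 x hx) with h1 | h1
      · exfalso
        have hsub : uIcc x ((a + b) / 2) ⊆ Ioo a b := (ordConnected_Ioo).uIcc_subset hx hx0
        have hiv := intermediate_value_uIcc (hg2c.mono hsub)
        have h0mem : (0:ℝ) ∈ uIcc (g2 x) (g2 ((a + b) / 2)) := by
          rw [mem_uIcc]; left; exact ⟨h1.le, h0.le⟩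
        obtain ⟨y, hy, hy0⟩ := hiv h0mem
        exact hne0 y (hsub hy) hy0
      · exact h1
  rcases hsign with hpos | hneg
  · apply lemB a b lam g g1 g2 hab hlam hgc hd1 hd2 hg1c hg2c
    intro x hx
    have := hlow x hx
    rwa [abs_of_pos (hpos x hx)] at this
  · have key := lemB a b lam (fun x => -g x) (fun x => -g1 x) (fun x => -g2 x) hab hlam
      hgc.neg (fun x hx => (hd1 x hx).neg) (fun x hx => (hd2 x hx).neg)
      hg1c.neg hg2c.neg
      (fun x hx => by
        have := hlow x hx
        rw [abs_of_neg (hneg x hx)] at this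
        simpa using this)
    have hconj : ∀ x : ℝ, Complex.exp (Complex.I * ((-g x : ℝ) : ℂ)) =
        (starRingEnd ℂ) (Complex.exp (Complex.I * g x)) := by
      intro x
      rw [← Complex.exp_conj]
      congr 1
      rw [map_mul, Complex.conj_I, Complex.conj_ofReal]
      push_cast
      ring
    calc ‖∫ x in a..b, Complex.exp (Complex.I * g x)‖
        = ‖(starRingEnd ℂ) (∫ x in a..b, Complex.exp (Complex.I * g x))‖ :=
          (RCLike.norm_conj _).symm
      _ = ‖∫ x in a..b, Complex.exp (Complex.I * ((-g x : ℝ) : ℂ))‖ := by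
          rw [← vdc_conj_intervalIntegral]
          congr 1
          exact integral_congr (fun x _ => (hconj x).symm)
      _ ≤ 10 / Real.sqrt lam := key

open MeasureTheory Set intervalIntegral in
/-- Second-derivative test: there is an absolute constant `C` such that for
any `a < b`, any real-valued `g` smooth on `(a,b)`, continuous on `[a,b]`, with
`|g''| ≥ λ > 0` on `(a,b)`, and any `C¹` function `f : [a,b] → ℂ`,
`|∫_a^b f(x) e^{i g(x)} dx| ≤ C λ^{-1/2} (|f(b)| + ∫_a^b |f'(x)| dx)`. -/
theorem stmt_2 :
    ∃ C : ℝ, 0 < C ∧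
      ∀ (a b lam : ℝ) (g : ℝ → ℝ) (f : ℝ → ℂ),
        a < b → 0 < lam →
        ContDiffOn ℝ (⊤ : ℕ∞) g (Set.Ioo a b) →
        ContinuousOn g (Set.Icc a b) →
        (∀ x ∈ Set.Ioo a b, lam ≤ |deriv (deriv g) x|) →
        ContDiffOn ℝ 1 f (Set.Icc a b) →
        ‖∫ x in a..b, f x * Complex.exp (Complex.I * g x)‖ ≤
          C * (Real.sqrt lam)⁻¹ * (‖f b‖ + ∫ x in a..b, ‖deriv f x‖) := by
  refine ⟨10, by norm_num, ?_⟩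
  intro a b lam g f hab hlam hg hgc hg'' hf
  -- derivative data for g
  have hd1 : ∀ x ∈ Ioo a b, HasDerivAt g (deriv g x) x := fun x hx =>
    ((hg.differentiableOn (by simp) x hx).differentiableAt (isOpen_Ioo.mem_nhds hx)).hasDerivAt
  have hg1s : ContDiffOn ℝ (⊤ : ℕ∞) (deriv g) (Ioo a b) := hg.deriv_of_isOpen isOpen_Ioo (by simp)
  have hd2 : ∀ x ∈ Ioo a b, HasDerivAt (deriv g) (deriv (deriv g) x) x := fun x hx =>
    ((hg1s.differentiableOn (by simp) x hx).differentiableAt (isOpen_Ioo.mem_nhds hx)).hasDerivAt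
  have hg1c : ContinuousOn (deriv g) (Ioo a b) := hg1s.continuousOn
  have hg2c : ContinuousOn (deriv (deriv g)) (Ioo a b) :=
    (hg1s.deriv_of_isOpen isOpen_Ioo (m := (⊤ : ℕ∞)) (by simp)).continuousOn
  set B : ℝ := 10 / Real.sqrt lam with hB_def
  have hBpos : 0 ≤ B := by positivity
  -- clamped phase
  set cl : ℝ → ℝ := fun x => max a (min x b) with hcl_def
  have hclcont : Continuous cl := continuous_const.max (continuous_id.min continuous_const)
  have hclmem : ∀ x, cl x ∈ Icc a b := fun x =>
    ⟨le_max_left _ _, max_le hab.le (min_le_right _ _)⟩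
  have hcleq : ∀ x ∈ Icc a b, cl x = x := fun x hx => by
    simp only [hcl_def]; rw [min_eq_left hx.2, max_eq_right hx.1]
  have hq : Continuous (fun x => g (cl x)) := hgc.comp_continuous hclcont hclmem
  set eg : ℝ → ℂ := fun x => Complex.exp (Complex.I * g (cl x)) with heg_def
  have hegc : Continuous eg :=
    Complex.continuous_exp.comp (continuous_const.mul (Complex.continuous_ofReal.comp hq))
  set F : ℝ → ℂ := fun x => ∫ t in a..x, eg t with hF_def
  have hF : ∀ x, HasDerivAt F (eg x) x := fun x => (hegc.integral_hasStrictDerivAt a x).hasDerivAt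
  have hFc : Continuous F := continuous_iff_continuousAt.2 fun x => (hF x).continuousAt
  have hFa : F a = 0 := integral_same
  have hFB : ∀ x ∈ Icc a b, ‖F x‖ ≤ B := by
    intro x hx
    rcases eq_or_lt_of_le hx.1 with heq | hax
    · simp only [hF_def]
      rw [← heq, integral_same]
      simpa using hBpos
    · have hFx : F x = ∫ t in a..x, Complex.exp (Complex.I * g t) := by
        apply integral_congr
        intro t ht
        rw [uIcc_of_le hx.1] at ht
        have ht' : t ∈ Icc a b := Icc_subset_Icc_right hx.2 ht
        simp only [heg_def]
        rw [hcleq t ht']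
      rw [hFx]
      have hIoo : Ioo a x ⊆ Ioo a b := Ioo_subset_Ioo_right hx.2
      exact lemB' a x lam g (deriv g) (deriv (deriv g)) hax hlam
        (hgc.mono (Icc_subset_Icc_right hx.2))
        (fun t ht => hd1 t (hIoo ht)) (fun t ht => hd2 t (hIoo ht))
        (hg1c.mono hIoo) (hg2c.mono hIoo) (fun t ht => hg'' t (hIoo ht))
  -- f data
  set φ : ℝ → ℂ := derivWithin f (Icc a b) with hφ_def
  have hφc : ContinuousOn φ (Icc a b) :=
    hf.continuousOn_derivWithin (uniqueDiffOn_Icc hab) le_rfl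
  have hφeq : ∀ x ∈ Ioo a b, φ x = deriv f x := fun x hx =>
    derivWithin_of_mem_nhds (Icc_mem_nhds hx.1 hx.2)
  have hfd : ∀ x ∈ Ioo a b, HasDerivAt f (φ x) x := by
    intro x hx
    have h1 : DifferentiableWithinAt ℝ f (Icc a b) x :=
      hf.differentiableOn one_ne_zero x (Ioo_subset_Icc_self hx)
    have h2 : DifferentiableAt ℝ f x := h1.differentiableAt (Icc_mem_nhds hx.1 hx.2)
    rw [hφeq x hx]
    exact h2.hasDerivAt
  have hfc : ContinuousOn f (Icc a b) := hf.continuousOn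
  have huIcc : uIcc a b = Icc a b := uIcc_of_le hab.le
  -- integration by parts
  have hparts := integral_mul_deriv_eq_deriv_mul_of_hasDeriv_right
    (u := f) (v := F) (u' := φ) (v' := eg) (a := a) (b := b)
    (hfc.mono huIcc.subset) hFc.continuousOn
    (fun x hx => by
      rw [min_eq_left hab.le, max_eq_right hab.le] at hx
      exact (hfd x hx).hasDerivWithinAt)
    (fun x _ => (hF x).hasDerivWithinAt)
    ((hφc.mono huIcc.subset).intervalIntegrable)
    (hegc.intervalIntegrable a b)
  have hLHS : ∫ x in a..b, f x * Complex.exp (Complex.I * g x) = ∫ x in a..b, f x * eg x := by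
    apply integral_congr
    intro x hx
    rw [huIcc] at hx
    simp only [heg_def]
    rw [hcleq x hx]
  -- convert RHS integral
  have hIφ : ∫ x in a..b, ‖deriv f x‖ = ∫ x in a..b, ‖φ x‖ := by
    apply intervalIntegral.integral_congr_ae
    have hbae : ∀ᵐ (x : ℝ), x ≠ b := by
      refine ae_iff.2 ?_
      have : {x : ℝ | ¬x ≠ b} = {b} := by ext x; simp
      rw [this]
      exact measure_singleton b
    filter_upwards [hbae] with x hxb hmem
    rw [uIoc_of_le hab.le] at hmem
    have hxIoo : x ∈ Ioo a b := ⟨hmem.1, lt_of_le_of_ne hmem.2 hxb⟩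
    rw [hφeq x hxIoo]
  -- integrability for the monotone bound
  have hint1 : IntervalIntegrable (fun x => ‖φ x * F x‖) volume a b :=
    (((hφc.mul hFc.continuousOn).norm).mono huIcc.subset).intervalIntegrable
  have hint2 : IntervalIntegrable (fun x => ‖φ x‖ * B) volume a b :=
    (((hφc.norm).mul continuousOn_const).mono huIcc.subset).intervalIntegrable
  have hbound : ‖∫ x in a..b, φ x * F x‖ ≤ (∫ x in a..b, ‖φ x‖) * B := by
    calc ‖∫ x in a..b, φ x * F x‖ ≤ ∫ x in a..b, ‖φ x * F x‖ :=
          norm_integral_le_integral_norm hab.le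
      _ ≤ ∫ x in a..b, ‖φ x‖ * B := by
          apply integral_mono_on hab.le hint1 hint2
          intro x hx
          rw [norm_mul]
          exact mul_le_mul_of_nonneg_left (hFB x hx) (norm_nonneg _)
      _ = (∫ x in a..b, ‖φ x‖) * B := integral_mul_const _ _
  have hφnonneg : 0 ≤ ∫ x in a..b, ‖φ x‖ :=
    integral_nonneg hab.le (fun x _ => norm_nonneg _)
  rw [hLHS, hparts, hFa, mul_zero, sub_zero]
  have hfbF : ‖f b * F b‖ ≤ ‖f b‖ * B := by
    rw [norm_mul]
    exact mul_le_mul_of_nonneg_left (hFB b (right_mem_Icc.2 hab.le)) (norm_nonneg _)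
  calc ‖f b * F b - ∫ x in a..b, φ x * F x‖
      ≤ ‖f b * F b‖ + ‖∫ x in a..b, φ x * F x‖ := norm_sub_le _ _
    _ ≤ ‖f b‖ * B + (∫ x in a..b, ‖φ x‖) * B := add_le_add hfbF hbound
    _ = 10 * (Real.sqrt lam)⁻¹ * (‖f b‖ + ∫ x in a..b, ‖φ x‖) := by
        simp only [hB_def]
        field_simp
    _ = 10 * (Real.sqrt lam)⁻¹ * (‖f b‖ + ∫ x in a..b, ‖deriv f x‖) := by rw [hIφ]
end

section
/- Let $0 < \kappa < 1$, $\eta > 0$, and $\xi \geq 0$. Then $\left|\int_0^{\eta\cosh\xi} \sin(q - \tfrac{\pi\kappa}{2})\, q^{\kappa-1}\, dq\right| \leq C_\kappa\, (\eta\cosh\xi)^{\kappa - 1}$ for a constant $C_\kappa$ depending only on $\kappa$. -/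
/-!
Write `q ^ (κ - 1) = Γ(1 - κ)⁻¹ ∫₀^∞ t ^ (-κ) e^(-q t) dt` and swap the integrals. The inner
integral `∫₀^T sin (q - c) e^(-t q) dq` is elementary: a part `(cos c - t sin c) / (1 + t²)` that
does not depend on `T`, and a boundary term bounded by `e^(-t T)`. For the phase `c = π κ / 2` the
first part integrates to zero against `t ^ (-κ)`, by the beta-type integral
`∫₀^∞ t ^ (a - 1) / (1 + t²) dt = π / (2 sin (π a / 2))`. The boundary term contributes at most
`∫₀^∞ t ^ (-κ) e^(-t T) dt = Γ(1 - κ) T ^ (κ - 1)`, so the bound holds with `C = 1`.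
-/

open MeasureTheory Real Set

theorem integral_rpow_mul_one_sub_rpow {u v : ℝ} (hu : 0 < u) (hv : 0 < v) :
    ∫ x in Ioo (0 : ℝ) 1, x ^ (u - 1) * (1 - x) ^ (v - 1) = Gamma u * Gamma v / Gamma (u + v) := by
  have hbeta := Complex.betaIntegral_eq_Gamma_mul_div u v (by simpa) (by simpa)
  have hreal : Complex.betaIntegral u v
      = ↑(∫ x in (0 : ℝ)..1, x ^ (u - 1) * (1 - x) ^ (v - 1)) := by
    rw [Complex.betaIntegral, ← intervalIntegral.integral_ofReal]
    refine intervalIntegral.integral_congr fun x hx => ?_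
    rw [uIcc_of_le zero_le_one] at hx
    push_cast
    rw [Complex.ofReal_cpow hx.1, Complex.ofReal_cpow (sub_nonneg.2 hx.2)]
    push_cast
    ring_nf
  rw [← integral_Ioc_eq_integral_Ioo, ← intervalIntegral.integral_of_le zero_le_one]
  apply Complex.ofReal_injective
  rw [← hreal, hbeta, ← Complex.ofReal_add]
  simp only [Complex.Gamma_ofReal, Complex.ofReal_mul, Complex.ofReal_div]

theorem image_div_one_sub_Ioo : (fun x : ℝ => x / (1 - x)) '' Ioo 0 1 = Ioi 0 := by
  ext y
  refine ⟨?_, fun (hy : 0 < y) => ⟨y / (1 + y), ⟨by positivity, ?_⟩, ?_⟩⟩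
  · rintro ⟨x, ⟨hx0, hx1⟩, rfl⟩
    exact div_pos hx0 (sub_pos.2 hx1)
  · rw [div_lt_one (by positivity)]; linarith
  · have : (1 : ℝ) + y ≠ 0 := by positivity
    field_simp
    ring

theorem integral_rpow_div_one_add {b : ℝ} (hb0 : 0 < b) (hb1 : b < 1) :
    ∫ u in Ioi (0 : ℝ), u ^ (b - 1) / (1 + u) = π / sin (π * b) := by
  have hderiv : ∀ x ∈ Ioo (0 : ℝ) 1,
      HasDerivWithinAt (fun x => x / (1 - x)) (1 / (1 - x) ^ 2) (Ioo 0 1) x := by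
    intro x hx
    have hx1 : 1 - x ≠ 0 := (sub_pos.2 hx.2).ne'
    refine (((hasDerivAt_id' x).div ((hasDerivAt_id' x).const_sub 1) hx1).congr_deriv
      ?_).hasDerivWithinAt
    field_simp
    ring
  have hinj : InjOn (fun x : ℝ => x / (1 - x)) (Ioo 0 1) := by
    intro x hx y hy h
    have := (sub_pos.2 hx.2).ne'
    have := (sub_pos.2 hy.2).ne'
    field_simp at h
    linarith
  have hbeta := integral_rpow_mul_one_sub_rpow hb0 (sub_pos.2 hb1)
  rw [add_sub_cancel, Gamma_one, div_one, Gamma_mul_Gamma_one_sub] at hbeta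
  rw [← image_div_one_sub_Ioo,
    integral_image_eq_integral_abs_deriv_smul measurableSet_Ioo hderiv hinj, ← hbeta]
  refine setIntegral_congr_fun measurableSet_Ioo fun x hx => ?_
  have hx1 : 0 < 1 - x := sub_pos.2 hx.2
  rw [smul_eq_mul, abs_of_pos (by positivity), div_rpow hx.1.le hx1.le,
    show 1 + x / (1 - x) = (1 - x)⁻¹ by field_simp; ring, show 1 - b - 1 = -(b - 1) - 1 by ring,
    rpow_sub hx1 (-(b - 1)) 1, rpow_neg hx1.le, rpow_one]
  field_simp

theorem integral_rpow_div_one_add_sq {a : ℝ} (ha0 : 0 < a) (ha2 : a < 2) :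
    ∫ t in Ioi (0 : ℝ), t ^ (a - 1) / (1 + t ^ 2) = π / 2 / sin (π * a / 2) := by
  have hsubst := integral_comp_rpow_Ioi_of_pos (g := fun u => u ^ (a / 2 - 1) / (1 + u)) two_pos
  rw [integral_rpow_div_one_add (by linarith) (by linarith), ← mul_div_assoc] at hsubst
  rw [div_right_comm, ← hsubst, ← integral_div]
  refine setIntegral_congr_fun measurableSet_Ioi fun t (ht : 0 < t) => ?_
  rw [smul_eq_mul, ← rpow_mul ht.le, rpow_two, show (2 : ℝ) - 1 = 1 by norm_num, rpow_one,
    show 2 * (a / 2 - 1) = (a - 1) - 1 by ring, rpow_sub_one ht.ne' (a - 1)]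
  field_simp

theorem integrableOn_rpow_div_one_add_sq {a : ℝ} (ha0 : 0 < a) (ha2 : a < 2) :
    IntegrableOn (fun t : ℝ => t ^ (a - 1) / (1 + t ^ 2)) (Ioi 0) := by
  have : 0 < sin (π * a / 2) := sin_pos_of_pos_of_lt_pi (by positivity) (by nlinarith [pi_pos])
  refine Integrable.of_integral_ne_zero ?_
  rw [integral_rpow_div_one_add_sq ha0 ha2]
  positivity

theorem eqOn_rpow_neg_mul_cos_sub_mul_sin_div (κ c : ℝ) :
    EqOn (fun t : ℝ => t ^ (-κ) * (cos c - t * sin c) / (1 + t ^ 2))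
      (fun t => cos c * (t ^ ((1 - κ) - 1) / (1 + t ^ 2))
        - sin c * (t ^ ((2 - κ) - 1) / (1 + t ^ 2))) (Ioi 0) := by
  intro t (ht : 0 < t)
  dsimp only
  rw [show (1 - κ) - 1 = -κ by ring, show (2 - κ) - 1 = -κ + 1 by ring, rpow_add ht, rpow_one]
  ring

theorem integrableOn_rpow_neg_mul_cos_sub_mul_sin_div {κ : ℝ} (hκ0 : 0 < κ) (hκ1 : κ < 1) (c : ℝ) :
    IntegrableOn (fun t : ℝ => t ^ (-κ) * (cos c - t * sin c) / (1 + t ^ 2)) (Ioi 0) :=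
  IntegrableOn.congr_fun
    (((integrableOn_rpow_div_one_add_sq (by linarith) (by linarith)).const_mul _).sub
      ((integrableOn_rpow_div_one_add_sq (by linarith) (by linarith)).const_mul _))
    (eqOn_rpow_neg_mul_cos_sub_mul_sin_div κ c).symm measurableSet_Ioi

theorem integral_rpow_neg_mul_cos_sub_mul_sin_div_eq_zero {κ : ℝ} (hκ0 : 0 < κ) (hκ1 : κ < 1) :
    ∫ t in Ioi (0 : ℝ), t ^ (-κ) * (cos (π * κ / 2) - t * sin (π * κ / 2)) / (1 + t ^ 2) = 0 := by
  rw [setIntegral_congr_fun measurableSet_Ioi (eqOn_rpow_neg_mul_cos_sub_mul_sin_div κ _),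
    integral_sub ((integrableOn_rpow_div_one_add_sq (by linarith) (by linarith)).const_mul _)
      ((integrableOn_rpow_div_one_add_sq (by linarith) (by linarith)).const_mul _),
    integral_const_mul, integral_const_mul,
    integral_rpow_div_one_add_sq (by linarith) (by linarith),
    integral_rpow_div_one_add_sq (by linarith) (by linarith),
    show π * (1 - κ) / 2 = π / 2 - π * κ / 2 by ring, sin_pi_div_two_sub,
    show π * (2 - κ) / 2 = π - π * κ / 2 by ring, sin_pi_sub]
  have hcos : 0 < cos (π * κ / 2) :=
    cos_pos_of_mem_Ioo ⟨by nlinarith [pi_pos], by nlinarith [pi_pos]⟩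
  have hsin : 0 < sin (π * κ / 2) := sin_pos_of_pos_of_lt_pi (by positivity) (by nlinarith [pi_pos])
  field_simp
  ring

theorem integrableOn_rpow_neg_mul_exp_neg_mul {κ r : ℝ} (hκ : κ < 1) (hr : 0 < r) :
    IntegrableOn (fun t : ℝ => t ^ (-κ) * exp (-(r * t))) (Ioi 0) := by
  simpa [rpow_one] using integrableOn_rpow_mul_exp_neg_mul_rpow (p := 1) (by linarith) one_pos hr

theorem integral_rpow_neg_mul_exp_neg_mul {κ r : ℝ} (hκ : κ < 1) (hr : 0 < r) :
    ∫ t in Ioi (0 : ℝ), t ^ (-κ) * exp (-(r * t)) = Gamma (1 - κ) * r ^ (κ - 1) := by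
  rw [← sub_sub_cancel_left 1 κ, integral_rpow_mul_exp_neg_mul_Ioi (by linarith) hr, one_div,
    inv_rpow hr.le, ← rpow_neg hr.le, mul_comm]
  ring_nf

theorem integral_sin_sub_mul_exp_neg_mul (c t : ℝ) {T : ℝ} (hT : 0 ≤ T) :
    ∫ q in Ioc 0 T, sin (q - c) * exp (-(t * q))
      = (cos c - t * sin c) / (1 + t ^ 2)
        - exp (-(t * T)) * (t * sin (T - c) + cos (T - c)) / (1 + t ^ 2) := by
  have hprim : ∀ q ∈ uIcc 0 T, HasDerivAt
      (fun q => -(exp (-(t * q)) * (t * sin (q - c) + cos (q - c))) / (1 + t ^ 2))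
      (sin (q - c) * exp (-(t * q))) q := by
    intro q _
    have hexp := ((hasDerivAt_id' q).const_mul t).neg.exp
    have hsin := ((hasDerivAt_id' q).sub_const c).sin
    have hcos := ((hasDerivAt_id' q).sub_const c).cos
    refine (((hexp.mul ((hsin.const_mul t).add hcos)).neg).div_const _).congr_deriv ?_
    simp only [Pi.neg_apply, Pi.add_apply]
    field_simp
    ring
  rw [← intervalIntegral.integral_of_le hT, intervalIntegral.integral_eq_sub_of_hasDerivAt hprim
    (Continuous.intervalIntegrable (by fun_prop) _ _)]
  simp only [mul_zero, neg_zero, exp_zero, zero_sub, sin_neg, cos_neg]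
  ring

theorem Gamma_one_sub_mul_integral_mul_rpow {κ T M : ℝ} {f : ℝ → ℝ} (hκ0 : 0 < κ) (hκ1 : κ < 1)
    (hf : Measurable f) (hfM : ∀ q, |f q| ≤ M) :
    Gamma (1 - κ) * ∫ q in Ioc 0 T, f q * q ^ (κ - 1)
      = ∫ t in Ioi 0, t ^ (-κ) * ∫ q in Ioc 0 T, f q * exp (-(t * q)) := by
  set μ := (volume.restrict (Ioc 0 T)).prod (volume.restrict (Ioi (0 : ℝ)))
  set kernel : ℝ × ℝ → ℝ := fun p => p.2 ^ (-κ) * exp (-(p.1 * p.2))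
  have hkernel : Integrable kernel μ := by
    rw [integrable_prod_iff (by fun_prop)]
    refine ⟨ae_restrict_of_forall_mem measurableSet_Ioc fun q hq =>
      integrableOn_rpow_neg_mul_exp_neg_mul hκ1 hq.1, ?_⟩
    refine Integrable.congr (f := fun q => Gamma (1 - κ) * q ^ (κ - 1)) ?_ ?_
    · exact ((intervalIntegral.intervalIntegrable_rpow' (by linarith)).1.mono_set
        (Ioc_subset_uIoc)).const_mul _
    · refine ae_restrict_of_forall_mem measurableSet_Ioc fun q hq => ?_
      dsimp only
      rw [← integral_rpow_neg_mul_exp_neg_mul hκ1 hq.1]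
      refine setIntegral_congr_fun measurableSet_Ioi fun t (ht : 0 < t) => ?_
      exact (Real.norm_of_nonneg (by positivity)).symm
  have hF : Integrable (fun p : ℝ × ℝ => f p.1 * kernel p) μ :=
    hkernel.bdd_mul (hf.comp measurable_fst).aestronglyMeasurable
      (Filter.Eventually.of_forall fun p => hfM p.1)
  calc Gamma (1 - κ) * ∫ q in Ioc 0 T, f q * q ^ (κ - 1)
      = ∫ q in Ioc 0 T, ∫ t in Ioi 0, f q * kernel (q, t) := by
        rw [← integral_const_mul]
        refine setIntegral_congr_fun measurableSet_Ioc fun q hq => ?_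
        rw [integral_const_mul, integral_rpow_neg_mul_exp_neg_mul hκ1 hq.1]
        ring
    _ = ∫ t in Ioi 0, ∫ q in Ioc 0 T, f q * kernel (q, t) := integral_integral_swap hF
    _ = ∫ t in Ioi 0, t ^ (-κ) * ∫ q in Ioc 0 T, f q * exp (-(t * q)) := by
        refine integral_congr_ae (Filter.Eventually.of_forall fun t => ?_)
        dsimp only
        rw [← integral_const_mul]
        refine integral_congr_ae (Filter.Eventually.of_forall fun q => ?_)
        simp only [kernel]
        rw [mul_comm q t]
        ring

theorem abs_mul_sin_add_cos_le (t x : ℝ) : |t * sin x + cos x| ≤ 1 + t ^ 2 := by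
  refine abs_le_of_sq_le_sq ?_ (by positivity)
  nlinarith [sin_sq_add_cos_sq x, sq_nonneg (t * cos x - sin x), sq_nonneg t]

theorem abs_integral_sin_sub_mul_rpow_le {κ T : ℝ} (hκ0 : 0 < κ) (hκ1 : κ < 1) (hT : 0 < T) :
    |∫ q in Ioc 0 T, sin (q - π * κ / 2) * q ^ (κ - 1)| ≤ T ^ (κ - 1) := by
  set c := π * κ / 2
  set boundary : ℝ → ℝ := fun t =>
    t ^ (-κ) * (exp (-(t * T)) * (t * sin (T - c) + cos (T - c)) / (1 + t ^ 2))
  have hboundary : ∀ t ∈ Ioi (0 : ℝ), ‖boundary t‖ ≤ t ^ (-κ) * exp (-(T * t)) := by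
    intro t (ht : 0 < t)
    have hsq : 0 < 1 + t ^ 2 := by positivity
    rw [Real.norm_eq_abs, abs_mul, abs_div, abs_mul, abs_of_pos (rpow_pos_of_pos ht _),
      abs_of_pos (exp_pos _), abs_of_pos hsq, mul_div_assoc, mul_comm T t]
    gcongr
    exact mul_le_of_le_one_right (exp_pos _).le
      ((div_le_one hsq).2 (abs_mul_sin_add_cos_le t (T - c)))
  have hint : IntegrableOn boundary (Ioi 0) :=
    (integrableOn_rpow_neg_mul_exp_neg_mul hκ1 hT).mono' (by fun_prop)
      (ae_restrict_of_forall_mem measurableSet_Ioi hboundary)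
  have hfubini : Gamma (1 - κ) * ∫ q in Ioc 0 T, sin (q - c) * q ^ (κ - 1)
      = -∫ t in Ioi 0, boundary t := by
    have hzero : ∫ t in Ioi (0 : ℝ), t ^ (-κ) * (cos c - t * sin c) / (1 + t ^ 2) = 0 :=
      integral_rpow_neg_mul_cos_sub_mul_sin_div_eq_zero hκ0 hκ1
    calc _ = ∫ t in Ioi 0, (t ^ (-κ) * (cos c - t * sin c) / (1 + t ^ 2) - boundary t) := by
          rw [Gamma_one_sub_mul_integral_mul_rpow hκ0 hκ1 (by fun_prop)
            (fun q => abs_sin_le_one (q - c))]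
          refine setIntegral_congr_fun measurableSet_Ioi fun t _ => ?_
          rw [integral_sin_sub_mul_exp_neg_mul c t hT.le]
          ring
      _ = -∫ t in Ioi 0, boundary t := by
          rw [integral_sub (integrableOn_rpow_neg_mul_cos_sub_mul_sin_div hκ0 hκ1 c) hint, hzero,
            zero_sub]
  have hG : 0 < Gamma (1 - κ) := Gamma_pos_of_pos (by linarith)
  refine le_of_mul_le_mul_left ?_ hG
  calc Gamma (1 - κ) * |∫ q in Ioc 0 T, sin (q - c) * q ^ (κ - 1)|
      = |∫ t in Ioi 0, boundary t| := by rw [← abs_of_pos hG, ← abs_mul, hfubini, abs_neg]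
    _ ≤ ∫ t in Ioi 0, t ^ (-κ) * exp (-(T * t)) :=
        norm_integral_le_of_norm_le (integrableOn_rpow_neg_mul_exp_neg_mul hκ1 hT)
          (ae_restrict_of_forall_mem measurableSet_Ioi hboundary)
    _ = Gamma (1 - κ) * T ^ (κ - 1) := integral_rpow_neg_mul_exp_neg_mul hκ1 hT

/-- For `0 < κ < 1` there is a constant `C_κ` such that for all `η > 0` and `ξ ≥ 0`,
`|∫_0^{η cosh ξ} sin(q - πκ/2) q^{κ-1} dq| ≤ C_κ (η cosh ξ)^{κ-1}`. -/
theorem stmt_6 (κ : ℝ) (h0 : 0 < κ) (h1 : κ < 1) :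
    ∃ C : ℝ, 0 < C ∧
      ∀ (η ξ : ℝ), 0 < η → 0 ≤ ξ →
        |∫ q in Set.Ioc (0 : ℝ) (η * Real.cosh ξ),
            Real.sin (q - Real.pi * κ / 2) * q ^ (κ - 1)| ≤
          C * (η * Real.cosh ξ) ^ (κ - 1) := by
  refine ⟨1, one_pos, fun η ξ hη _ => ?_⟩
  rw [one_mul]
  exact abs_integral_sin_sub_mul_rpow_le h0 h1 (mul_pos hη (cosh_pos ξ))
end

section
/- Let $\ell$ be an odd integer, $\chi$ a Dirichlet character of modulus $N$, and let $r, s$ be coprime positive integers with $N \mid rs$ and $4 \mid s$. Write $\chi = \chi_r \chi_s$ with $\chi_r$ of modulus $(N,r)$ and $\chi_s$ of modulus $(N,s)$, and choose integers $\bar r, \bar s$ with $\bar r r + \bar s s = 1$. Then for all integers $m, n$: $K_\ell(m,n;rs;\chi) = S(m\bar s, n\bar s; r; \chi_r)\, K_{\ell + r - 1}(m\bar r, n\bar r; s; \chi_s)$. -/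
open scoped BigOperators

/-- `e(x) = exp(2πix)`. -/
noncomputable def eFun (x : ℝ) : ℂ := Complex.exp (2 * Real.pi * Complex.I * x)

/-- `ε_d`: `1` if `d ≡ 1 (mod 4)`, `i` if `d ≡ 3 (mod 4)`. -/
noncomputable def epsFactor (d : ℤ) : ℂ := if d % 4 = 1 then 1 else Complex.I

/-- The Kronecker symbol `(a | 2)`. -/
def kron2 (a : ℤ) : ℤ :=
  if a % 2 = 0 then 0 else if a % 8 = 1 ∨ a % 8 = 7 then 1 else -1

/-- The extended Kronecker symbol `(a | n)`. -/
def kroneckerSym (a n : ℤ) : ℤ :=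
  if n = 0 then (if a = 1 ∨ a = -1 then 1 else 0)
  else
    (if n < 0 ∧ a < 0 then -1 else 1) *
      kron2 a ^ (n.natAbs.factorization 2) *
      jacobiSym a (n.natAbs / 2 ^ (n.natAbs.factorization 2))

/-- The half-integral weight Kloosterman sum
`K_ℓ(m,n;c;χ) = ∑_{ad ≡ 1 (c)} ε_d^ℓ conj(χ(d)) (c|d) e((ma+nd)/c)`. -/
noncomputable def Ksum (ℓ m n : ℤ) (c : ℕ) [NeZero c] {N : ℕ}
    (χ : DirichletCharacter ℂ N) : ℂ :=
  ∑ d : (ZMod c)ˣ,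
    epsFactor ((d : ZMod c).val : ℤ) ^ ℓ *
      (starRingEnd ℂ) (χ (((d : ZMod c).val : ℕ) : ZMod N)) *
      (kroneckerSym (c : ℤ) ((d : ZMod c).val : ℤ) : ℂ) *
      eFun (((m * (((d⁻¹ : (ZMod c)ˣ) : ZMod c).val : ℤ) +
              n * ((d : ZMod c).val : ℤ) : ℤ) : ℝ) / (c : ℝ))

/-- The Dirichlet-twisted Salié sum
`S(m,n;c;χ) = ∑_{ad ≡ 1 (c)} conj(χ(d)) (d|c) e((ma+nd)/c)`. -/
noncomputable def Ssum (m n : ℤ) (c : ℕ) [NeZero c] {N : ℕ}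
    (χ : DirichletCharacter ℂ N) : ℂ :=
  ∑ d : (ZMod c)ˣ,
    (starRingEnd ℂ) (χ (((d : ZMod c).val : ℕ) : ZMod N)) *
      (kroneckerSym ((d : ZMod c).val : ℤ) (c : ℤ) : ℂ) *
      eFun (((m * (((d⁻¹ : (ZMod c)ˣ) : ZMod c).val : ℤ) +
              n * ((d : ZMod c).val : ℤ) : ℤ) : ℝ) / (c : ℝ))

/-! The Chinese remainder theorem identifies `(ℤ/rsℤ)ˣ` with `(ℤ/rℤ)ˣ × (ℤ/sℤ)ˣ` via
`d ↦ (d mod r, d mod s)`, and the summands factor accordingly. The phase splits because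
`1/(rs) = s̄/r + r̄/s`, and the character because `χ = χ_r χ_s`. Quadratic reciprocity turns
`(rs | d)` into `(d | r) (s | d)` times the sign `(-1)^((r-1)/2 · (d-1)/2) = ε_d^(r-1)`, which is
absorbed into the weight `ℓ + r - 1`. Finally, since `4 ∣ s`, both `ε_d` and `(s | d)` depend
only on `d mod s`. -/

namespace ZMod

def unitsChineseRemainder {m n : ℕ} (h : m.Coprime n) :
    (ZMod (m * n))ˣ ≃* (ZMod m)ˣ × (ZMod n)ˣ :=
  (Units.mapEquiv (chineseRemainder h).toMulEquiv).trans MulEquiv.prodUnits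

theorem natCast_mod_of_dvd {d n : ℕ} (h : d ∣ n) (a : ℕ) : ((a % n : ℕ) : ZMod d) = a :=
  (natCast_eq_natCast_iff _ _ _).mpr ((Nat.mod_modEq a n).of_dvd h)

variable {m n : ℕ} [NeZero m] [NeZero n]

theorem val_unitsChineseRemainder_fst (h : m.Coprime n) (u : (ZMod (m * n))ˣ) :
    ((unitsChineseRemainder h u).1 : ZMod m).val = (u : ZMod (m * n)).val % m := by
  rw [← val_natCast, ← cast_eq_val]
  simp [unitsChineseRemainder, MulEquiv.prodUnits, chineseRemainder]

theorem val_unitsChineseRemainder_snd (h : m.Coprime n) (u : (ZMod (m * n))ˣ) :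
    ((unitsChineseRemainder h u).2 : ZMod n).val = (u : ZMod (m * n)).val % n := by
  rw [← val_natCast, ← cast_eq_val]
  simp [unitsChineseRemainder, MulEquiv.prodUnits, chineseRemainder]

end ZMod

theorem eFun_add (x y : ℝ) : eFun (x + y) = eFun x * eFun y := by
  rw [eFun, eFun, eFun, ← Complex.exp_add]
  push_cast
  ring_nf

theorem eFun_intCast (k : ℤ) : eFun k = 1 := by
  rw [eFun, ← Complex.exp_int_mul_two_pi_mul_I k]
  push_cast
  ring_nf

theorem eFun_intCast_div_congr {c : ℕ} {u v : ℤ} (h : u ≡ v [ZMOD c]) :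
    eFun (u / c) = eFun (v / c) := by
  rcases eq_or_ne c 0 with rfl | hc
  · simp
  obtain ⟨k, hk⟩ := h.dvd
  have hv : (v : ℝ) / c = u / c + k := by
    rw [show (v : ℝ) = u + c * k by exact_mod_cast (by linarith : v = u + c * k)]
    field_simp
  rw [hv, eFun_add, eFun_intCast, mul_one]

theorem eFun_div_mul_of_bezout {r s : ℕ} (hr : r ≠ 0) (hs : s ≠ 0) {rb sb : ℤ}
    (h : rb * r + sb * s = 1) (x : ℝ) :
    eFun (x / (r * s)) = eFun (sb * x / r) * eFun (rb * x / s) := by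
  rw [← eFun_add]
  congr 1
  have h' : (rb : ℝ) * r + sb * s = 1 := by exact_mod_cast h
  field_simp
  linear_combination (-x) * h'

theorem eFun_phase_mul_of_bezout {r s : ℕ} (hr : r ≠ 0) (hs : s ≠ 0) {rb sb : ℤ}
    (h : rb * r + sb * s = 1) (m n : ℤ) (a b : ℕ) :
    eFun ((m * b + n * a : ℤ) / (r * s : ℕ)) =
      eFun ((m * sb * (b % r : ℕ) + n * sb * (a % r : ℕ) : ℤ) / r) *
        eFun ((m * rb * (b % s : ℕ) + n * rb * (a % s : ℕ) : ℤ) / s) := by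
  have hcongr (c : ℕ) (k : ℤ) :
      m * k * (b % c : ℕ) + n * k * (a % c : ℕ) ≡ k * (m * b + n * a) [ZMOD c] := by
    have hb := Int.mod_modEq (b : ℤ) c
    have ha := Int.mod_modEq (a : ℤ) c
    push_cast
    calc _ ≡ m * k * b + n * k * a [ZMOD c] := by gcongr
      _ = _ := by ring
  rw [eFun_intCast_div_congr (hcongr r sb), eFun_intCast_div_congr (hcongr s rb), Nat.cast_mul,
    eFun_div_mul_of_bezout hr hs h]
  simp only [Int.cast_mul]

theorem epsFactor_ne_zero (d : ℤ) : epsFactor d ≠ 0 := by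
  unfold epsFactor
  split_ifs <;> simp

theorem epsFactor_sq {a : ℕ} (ha : Odd a) : epsFactor a ^ 2 = (-1) ^ (a / 2) := by
  rcases Nat.odd_mod_four_iff.mp (Nat.odd_iff.mp ha) with h | h
  · have h1 : (a : ℤ) % 4 = 1 := by omega
    have h2 : Even (a / 2) := Nat.even_iff.mpr (by omega)
    simp [epsFactor, h1, h2.neg_one_pow]
  · have h1 : (a : ℤ) % 4 ≠ 1 := by omega
    have h2 : Odd (a / 2) := Nat.odd_iff.mpr (by omega)
    simp [epsFactor, h1, h2.neg_one_pow]

theorem epsFactor_natCast_mod {a s : ℕ} (hs : 4 ∣ s) :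
    epsFactor (a % s : ℕ) = epsFactor a := by
  have h : ((a % s : ℕ) : ℤ) % 4 = (a : ℤ) % 4 := by
    push_cast
    exact Int.emod_emod_of_dvd _ (by exact_mod_cast hs)
  rw [epsFactor, epsFactor, h]

theorem kroneckerSym_natCast_of_odd (a : ℤ) {b : ℕ} (hb : Odd b) :
    kroneckerSym a b = jacobiSym a b := by
  have hb2 : ¬ 2 ∣ b := by
    rw [Nat.two_dvd_ne_zero]
    exact Nat.odd_iff.mp hb
  simp [kroneckerSym, hb.pos.ne', Nat.factorization_eq_zero_of_not_dvd hb2]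

theorem jacobiSym_four_mul_left (t : ℤ) {b : ℕ} (hb : Odd b) :
    jacobiSym (4 * t) b = jacobiSym t b := by
  have h2 : (2 : ℤ).gcd b = 1 := by
    rw [show (2 : ℤ) = ((2 : ℕ) : ℤ) from rfl, Int.gcd_natCast_natCast]
    exact Nat.coprime_two_left.mpr hb
  rw [jacobiSym.mul_left, show (4 : ℤ) = 2 ^ 2 by norm_num, jacobiSym.sq_one' h2, one_mul]

theorem jacobiSym_natCast_mod_right_of_four_dvd {s a : ℕ} (hs : 4 ∣ s) (ha : Odd a) :
    jacobiSym s a = jacobiSym s (a % s) := by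
  obtain ⟨t, rfl⟩ := hs
  have ha' := ha.mod_even (Even.mul_right (by decide : Even 4) t)
  push_cast
  rw [jacobiSym_four_mul_left _ ha, jacobiSym_four_mul_left _ ha', jacobiSym.mod_right' t ha]

theorem epsFactor_zpow_mul_kroneckerSym_mul {r s a : ℕ} (hr : Odd r) (hs : 4 ∣ s) (ha : Odd a)
    (ℓ : ℤ) :
    epsFactor a ^ ℓ * (kroneckerSym (r * s : ℕ) a : ℂ) =
      kroneckerSym (a % r : ℕ) r *
        (epsFactor (a % s : ℕ) ^ (ℓ + r - 1) * kroneckerSym s (a % s : ℕ)) := by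
  have has : Odd (a % s) := ha.mod_even (even_iff_two_dvd.mpr (dvd_trans ⟨2, rfl⟩ hs))
  have hexp : ℓ + r - 1 = ℓ + ((2 * (r / 2) : ℕ) : ℤ) := by
    have := Nat.odd_iff.mp hr
    push_cast
    omega
  rw [kroneckerSym_natCast_of_odd _ ha, kroneckerSym_natCast_of_odd _ hr,
    kroneckerSym_natCast_of_odd _ has, Nat.cast_mul, jacobiSym.mul_left,
    jacobiSym.quadratic_reciprocity hr ha, jacobiSym_natCast_mod_right_of_four_dvd hs ha,
    Int.natCast_mod, ← jacobiSym.mod_left, epsFactor_natCast_mod hs, hexp,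
    zpow_add₀ (epsFactor_ne_zero _), zpow_natCast, pow_mul (epsFactor _), epsFactor_sq ha]
  push_cast
  ring

theorem stmt_7_general {N : ℕ} (χ : DirichletCharacter ℂ N) (ℓ : ℤ)
    (r s : ℕ) [NeZero r] [NeZero s] (hrs : Nat.Coprime r s)
    (h4 : 4 ∣ s)
    (χr : DirichletCharacter ℂ (N.gcd r)) (χs : DirichletCharacter ℂ (N.gcd s))
    (hfac : ∀ d : ℤ, χ (d : ZMod N) = χr (d : ZMod (N.gcd r)) * χs (d : ZMod (N.gcd s)))
    (rb sb : ℤ) (hbez : rb * r + sb * s = 1) (m n : ℤ) :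
    Ksum ℓ m n (r * s) χ =
      Ssum (m * sb) (n * sb) r χr * Ksum (ℓ + (r : ℤ) - 1) (m * rb) (n * rb) s χs := by
  have h2s : 2 ∣ s := dvd_trans ⟨2, rfl⟩ h4
  have hr : Odd r := (hrs.coprime_dvd_right h2s).odd_of_right
  rw [Ssum, Ksum, Ksum, Finset.sum_mul_sum, ← Fintype.sum_prod_type']
  refine Fintype.sum_bijective _ (ZMod.unitsChineseRemainder hrs).bijective _ _ fun d => ?_
  have ha : Odd (d : ZMod (r * s)).val :=
    ((ZMod.val_coe_unit_coprime d).coprime_dvd_right (dvd_mul_of_dvd_right h2s r)).odd_of_right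
  have hχ : χ ((d : ZMod (r * s)).val : ZMod N) =
      χr (((d : ZMod (r * s)).val % r : ℕ) : ZMod (N.gcd r)) *
        χs (((d : ZMod (r * s)).val % s : ℕ) : ZMod (N.gcd s)) := by
    rw [ZMod.natCast_mod_of_dvd (N.gcd_dvd_right r), ZMod.natCast_mod_of_dvd (N.gcd_dvd_right s)]
    exact_mod_cast hfac (d : ZMod (r * s)).val
  simp only [← Prod.fst_inv, ← Prod.snd_inv, ← map_inv,
    ZMod.val_unitsChineseRemainder_fst, ZMod.val_unitsChineseRemainder_snd]
  rw [hχ, map_mul, eFun_phase_mul_of_bezout (NeZero.ne r) (NeZero.ne s) hbez,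
    mul_right_comm (epsFactor _ ^ ℓ), epsFactor_zpow_mul_kroneckerSym_mul hr h4 ha ℓ]
  ring

/-- Twisted multiplicativity relating half-integral Kloosterman sums and Salié sums:
for `r, s` coprime with `N ∣ rs` and `4 ∣ s`, and `χ = χ_r χ_s`, `r̄r + s̄s = 1`,
`K_ℓ(m,n;rs;χ) = S(ms̄, ns̄; r; χ_r) K_{ℓ+r-1}(mr̄, nr̄; s; χ_s)`. -/
theorem stmt_7 {N : ℕ} (χ : DirichletCharacter ℂ N) (ℓ : ℤ) (hℓ : Odd ℓ)
    (r s : ℕ) [NeZero r] [NeZero s] (hrs : Nat.Coprime r s)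
    (hN : N ∣ r * s) (h4 : 4 ∣ s)
    (χr : DirichletCharacter ℂ (N.gcd r)) (χs : DirichletCharacter ℂ (N.gcd s))
    (hfac : ∀ d : ℤ, χ (d : ZMod N) = χr (d : ZMod (N.gcd r)) * χs (d : ZMod (N.gcd s)))
    (rb sb : ℤ) (hbez : rb * r + sb * s = 1) (m n : ℤ) :
    Ksum ℓ m n (r * s) χ =
      Ssum (m * sb) (n * sb) r χr * Ksum (ℓ + (r : ℤ) - 1) (m * rb) (n * rb) s χs :=
  stmt_7_general χ ℓ r s hrs h4 χr χs hfac rb sb hbez m n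
end
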